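/- For all integers n ≥ 2 and q ≥ 2, the number of lines passing through exactly q points of the n×n grid {0,…,n−1}² equals (1/2)·(f_{q+1}(n) − 2 f_q(n) + f_{q−1}(n)), where f_q(n) = Σ_{−n<i,j<n, gcd(i,j)=q} (n−|i|)(n−|j|). -/

import Mathlib

open Finset Real Filter

/-- The grid `G(n) = {0,…,n−1}²` viewed as a set of points in `ℝ²`. -/
def gridPts (n : ℕ) : Set (ℝ × ℝ) :=
  {p | ∃ a b : ℤ, 0 ≤ a ∧ a < n ∧ 0 ≤ b ∧ b < n ∧ p = ((a : ℝ), (b : ℝ))}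

/-- `fq q n = Σ_{−n<i,j<n, gcd(i,j)=q} (n−|i|)(n−|j|)`. -/
noncomputable def fq (q n : ℕ) : ℤ :=
  ∑ i ∈ Finset.Ioo (-(n : ℤ)) n, ∑ j ∈ Finset.Ioo (-(n : ℤ)) n,
    if Int.gcd i j = q then ((n : ℤ) - |i|) * ((n : ℤ) - |j|) else 0

/-- The number of unordered pairs of distinct gridpoints whose closed segment
contains exactly `k` gridpoints (i.e. `k`-gridsegments, `k ≥ 2`). -/
noncomputable def segCount (n k : ℕ) : ℕ :=
  Set.ncard {s : Sym2 (ℝ × ℝ) | ∃ P Q : ℝ × ℝ, s = Sym2.mk P Q ∧ P ≠ Q ∧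
    P ∈ gridPts n ∧ Q ∈ gridPts n ∧ (segment ℝ P Q ∩ gridPts n).ncard = k}

/-- A subset of `ℝ²` is a line if it is the zero set of a nontrivial affine form. -/
def IsLine (L : Set (ℝ × ℝ)) : Prop :=
  ∃ a b c : ℝ, (a, b) ≠ (0, 0) ∧ L = {p | a * p.1 + b * p.2 + c = 0}

/-- The number of lines containing at least `q` points of the grid `G(n)`. -/
noncomputable def lineCountGe (n q : ℕ) : ℕ :=
  Set.ncard {L : Set (ℝ × ℝ) | IsLine L ∧ q ≤ (L ∩ gridPts n).ncard}

/-- The number of lines containing exactly `q` points of the grid `G(n)`. -/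
noncomputable def lineCountEq (n q : ℕ) : ℕ :=
  Set.ncard {L : Set (ℝ × ℝ) | IsLine L ∧ (L ∩ gridPts n).ncard = q}

/-!
For `r ≥ 1`, `f_r(n)` counts the ordered pairs `(A, B)` of grid points with `gcd(A - B) = r`.
Sort these pairs by the line through `A` and `B`. If `d` is a primitive direction of a line, its
grid points are `P + k • d` for `k` in an integer interval, of length `m` say, and
`gcd((k - l) • d) = |k - l|`; so the line contributes `2 (m - r)⁺` pairs. The second difference
of `r ↦ 2 (m - r)⁺` at `q ≥ 2` is `2 [m = q]`, and summing over lines gives the formula.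
-/

def cross {R : Type*} [CommRing R] (u v : R × R) : R := u.1 * v.2 - u.2 * v.1

lemma dot_eq_zero_iff_cross_eq_zero {R : Type*} [CommRing R] [NoZeroDivisors R]
    {a D w : R × R} (ha : a ≠ 0) (hD : D ≠ 0) (haD : a.1 * D.1 + a.2 * D.2 = 0) :
    a.1 * w.1 + a.2 * w.2 = 0 ↔ cross D w = 0 := by
  unfold cross
  constructor
  · intro haw
    have h1 : a.1 * (D.1 * w.2 - D.2 * w.1) = 0 := by linear_combination w.2 * haD - D.2 * haw
    have h2 : a.2 * (D.1 * w.2 - D.2 * w.1) = 0 := by linear_combination D.1 * haw - w.1 * haD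
    by_contra h
    exact ha (Prod.ext ((mul_eq_zero.mp h1).resolve_right h)
      ((mul_eq_zero.mp h2).resolve_right h))
  · intro hDw
    have h1 : D.1 * (a.1 * w.1 + a.2 * w.2) = 0 := by linear_combination w.1 * haD + a.2 * hDw
    have h2 : D.2 * (a.1 * w.1 + a.2 * w.2) = 0 := by linear_combination w.2 * haD - a.1 * hDw
    by_contra h
    exact hD (Prod.ext ((mul_eq_zero.mp h1).resolve_right h)
      ((mul_eq_zero.mp h2).resolve_right h))

def lineThrough (P Q : ℝ × ℝ) : Set (ℝ × ℝ) := {p | cross (Q - P) (p - P) = 0}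

lemma isLine_lineThrough {P Q : ℝ × ℝ} (h : P ≠ Q) : IsLine (lineThrough P Q) := by
  refine ⟨-(Q.2 - P.2), Q.1 - P.1, (Q.2 - P.2) * P.1 - (Q.1 - P.1) * P.2, ?_, ?_⟩
  · intro h0
    simp only [Prod.mk.injEq, neg_eq_zero, sub_eq_zero] at h0
    exact h (Prod.ext h0.2.symm h0.1.symm)
  · ext p
    simp only [lineThrough, cross, Set.mem_ofPred_eq, Prod.fst_sub, Prod.snd_sub]
    constructor <;> intro hp <;> linear_combination hp

lemma IsLine.eq_lineThrough {L : Set (ℝ × ℝ)} (hL : IsLine L) {P Q : ℝ × ℝ}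
    (hP : P ∈ L) (hQ : Q ∈ L) (hPQ : P ≠ Q) : L = lineThrough P Q := by
  obtain ⟨a, b, c, hab, rfl⟩ := hL
  simp only [Set.mem_ofPred_eq] at hP hQ
  have hQP : Q - P ≠ 0 := sub_ne_zero.mpr hPQ.symm
  ext p
  have key := dot_eq_zero_iff_cross_eq_zero (w := p - P) hab hQP
    (by simp only [Prod.fst_sub, Prod.snd_sub]; linear_combination hQ - hP)
  simp only [lineThrough, Set.mem_ofPred_eq, ← key, Prod.fst_sub, Prod.snd_sub]
  constructor <;> intro h
  · linear_combination h - hP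
  · linear_combination h + hP

def latticePt (v : ℤ × ℤ) : ℝ × ℝ := ((v.1 : ℝ), (v.2 : ℝ))

lemma latticePt_injective : Function.Injective latticePt := fun _ _ h =>
  Prod.ext (Int.cast_injective (congrArg Prod.fst h)) (Int.cast_injective (congrArg Prod.snd h))

def latticeLine (P Q : ℤ × ℤ) : Set (ℝ × ℝ) := lineThrough (latticePt P) (latticePt Q)

lemma latticePt_mem_latticeLine {P Q R : ℤ × ℤ} :
    latticePt R ∈ latticeLine P Q ↔ cross (Q - P) (R - P) = 0 := by
  simp only [latticeLine, lineThrough, cross, latticePt, Set.mem_ofPred_eq, Prod.fst_sub,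
    Prod.snd_sub]
  exact_mod_cast Iff.rfl

lemma isLine_latticeLine {P Q : ℤ × ℤ} (h : P ≠ Q) : IsLine (latticeLine P Q) :=
  isLine_lineThrough (latticePt_injective.ne h)

lemma left_mem_latticeLine (P Q : ℤ × ℤ) : latticePt P ∈ latticeLine P Q := by
  simp [latticePt_mem_latticeLine, cross]

lemma right_mem_latticeLine (P Q : ℤ × ℤ) : latticePt Q ∈ latticeLine P Q := by
  rw [latticePt_mem_latticeLine, cross]; ring

lemma IsLine.latticeLine_eq {L : Set (ℝ × ℝ)} (hL : IsLine L) {P Q : ℤ × ℤ}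
    (hP : latticePt P ∈ L) (hQ : latticePt Q ∈ L) (hPQ : P ≠ Q) : latticeLine P Q = L :=
  (hL.eq_lineThrough hP hQ (latticePt_injective.ne hPQ)).symm

noncomputable def gridZ (n : ℕ) : Finset (ℤ × ℤ) := Ico 0 (n : ℤ) ×ˢ Ico 0 (n : ℤ)

lemma gridPts_eq_image (n : ℕ) : gridPts n = latticePt '' gridZ n := by
  ext p
  simp only [gridPts, gridZ, Set.mem_ofPred_eq, Set.mem_image, coe_product, coe_Ico,
    Set.mem_prod, Set.mem_Ico, Prod.exists, latticePt]
  grind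

open scoped Classical in
noncomputable def gridOn (n : ℕ) (L : Set (ℝ × ℝ)) : Finset (ℤ × ℤ) :=
  {R ∈ gridZ n | latticePt R ∈ L}

lemma ncard_inter_gridPts (n : ℕ) (L : Set (ℝ × ℝ)) :
    (L ∩ gridPts n).ncard = #(gridOn n L) := by
  rw [← Set.ncard_coe_finset, ← Set.ncard_image_of_injective _ latticePt_injective,
    gridPts_eq_image, gridOn]
  congr 1
  ext p
  simp only [Set.mem_inter_iff, Set.mem_image, coe_filter, Set.mem_ofPred_eq, mem_coe]
  grind

lemma cross_smul_left {R : Type*} [CommRing R] (c : R) (d v : R × R) :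
    cross (c • d) v = c * cross d v := by
  simp only [cross, Prod.smul_fst, Prod.smul_snd, smul_eq_mul]; ring

lemma cross_eq_zero_iff_exists_smul {d v : ℤ × ℤ} (hd : Int.gcd d.1 d.2 = 1) :
    cross d v = 0 ↔ ∃ k : ℤ, v = k • d := by
  constructor
  · intro h
    obtain ⟨a, b, hab⟩ := Int.isCoprime_iff_gcd_eq_one.mpr hd
    refine ⟨a * v.1 + b * v.2, Prod.ext ?_ ?_⟩ <;>
      simp only [cross, Prod.smul_fst, Prod.smul_snd, smul_eq_mul] at h ⊢
    · linear_combination (-v.1) * hab - b * h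
    · linear_combination (-v.2) * hab + a * h
  · rintro ⟨k, rfl⟩
    simp only [cross, Prod.smul_fst, Prod.smul_snd, smul_eq_mul]; ring

lemma gcd_smul_of_gcd_eq_one {d : ℤ × ℤ} (hd : Int.gcd d.1 d.2 = 1) (k : ℤ) :
    Int.gcd (k • d).1 (k • d).2 = k.natAbs := by
  simp [Int.gcd_mul_left, hd]

lemma exists_primitive_smul_eq {D : ℤ × ℤ} (hD : D ≠ 0) :
    ∃ (g : ℕ) (d : ℤ × ℤ), 0 < g ∧ Int.gcd d.1 d.2 = 1 ∧ D = (g : ℤ) • d := by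
  have hg : 0 < Int.gcd D.1 D.2 := Int.gcd_pos_iff.mpr (by
    by_contra! h; exact hD (Prod.ext h.1 h.2))
  obtain ⟨g, a, b, hg, hab, ha, hb⟩ := Int.exists_gcd_one' hg
  exact ⟨g, (a, b), hg, hab, Prod.ext (by simp [ha, mul_comm]) (by simp [hb, mul_comm])⟩

lemma exists_primitive_forall_mem_latticeLine_iff {P Q : ℤ × ℤ} (hPQ : P ≠ Q) :
    ∃ d : ℤ × ℤ, Int.gcd d.1 d.2 = 1 ∧
      ∀ R, latticePt R ∈ latticeLine P Q ↔ ∃ k : ℤ, R = P + k • d := by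
  obtain ⟨g, d, hg, hd, hQP⟩ := exists_primitive_smul_eq (sub_ne_zero.mpr hPQ.symm)
  refine ⟨d, hd, fun R => ?_⟩
  rw [latticePt_mem_latticeLine, hQP, cross_smul_left, mul_eq_zero,
    or_iff_right (by positivity), cross_eq_zero_iff_exists_smul hd]
  simp only [sub_eq_iff_eq_add']

lemma card_filter_sub_eq_Icc (a b i : ℤ) :
    #{p ∈ Icc a b ×ˢ Icc a b | p.1 - p.2 = i} = (b + 1 - a - |i|).toNat := by
  have : {p ∈ Icc a b ×ˢ Icc a b | p.1 - p.2 = i} =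
      (Icc (max a (a + i)) (min b (b + i))).image fun k => (k, k - i) := by
    ext ⟨x, y⟩
    simp only [mem_filter, mem_product, mem_Icc, mem_image, Prod.mk.injEq]
    constructor
    · intro h
      exact ⟨x, by omega⟩
    · rintro ⟨k, hk, rfl, rfl⟩
      omega
  rw [this, card_image_of_injective _ fun k l h => congrArg Prod.fst h, Int.card_Icc]
  rcases abs_cases i with ⟨h, _⟩ | ⟨h, _⟩ <;> rw [h] <;> omega

lemma card_filter_natAbs_sub_eq_Icc (a b : ℤ) {r : ℕ} (hr : 0 < r) :
    #{p ∈ Icc a b ×ˢ Icc a b | (p.1 - p.2).natAbs = r} = 2 * ((b + 1 - a).toNat - r) := by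
  have hsplit : {p ∈ Icc a b ×ˢ Icc a b | (p.1 - p.2).natAbs = r} =
      {p ∈ Icc a b ×ˢ Icc a b | p.1 - p.2 = (r : ℤ)} ∪
        {p ∈ Icc a b ×ˢ Icc a b | p.1 - p.2 = -(r : ℤ)} := by
    rw [← filter_or]
    exact filter_congr fun p _ => by omega
  rw [hsplit, card_union_of_disjoint (disjoint_filter.mpr fun p _ h => by omega),
    card_filter_sub_eq_Icc, card_filter_sub_eq_Icc, abs_neg, Nat.abs_cast]
  omega

lemma Finset.eq_Icc_min'_max' {α : Type*} [LinearOrder α] [LocallyFiniteOrder α]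
    {s : Finset α} (hs : s.Nonempty) (hc : (s : Set α).OrdConnected) :
    s = Icc (s.min' hs) (s.max' hs) := by
  ext x
  refine ⟨fun hx => mem_Icc.mpr ⟨min'_le s x hx, le_max' s x hx⟩, fun hx => ?_⟩
  exact hc.out (min'_mem s hs) (max'_mem s hs) (mem_Icc.mp hx)

lemma card_filter_natAbs_sub_eq_of_ordConnected {K : Finset ℤ}
    (hK : (K : Set ℤ).OrdConnected) {r : ℕ} (hr : 0 < r) :
    #{p ∈ K ×ˢ K | (p.1 - p.2).natAbs = r} = 2 * (#K - r) := by
  obtain rfl | hne := K.eq_empty_or_nonempty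
  · simp
  rw [Finset.eq_Icc_min'_max' hne hK, card_filter_natAbs_sub_eq_Icc _ _ hr, Int.card_Icc]

lemma ordConnected_preimage_affine {s : Set ℤ} (hs : s.OrdConnected) (x d : ℤ) :
    ((fun k => x + k * d) ⁻¹' s).OrdConnected := by
  rcases le_total 0 d with hd | hd
  · exact hs.preimage_mono fun k l h => add_le_add_right (mul_le_mul_of_nonneg_right h hd) x
  · exact hs.preimage_anti fun k l h => add_le_add_right (mul_le_mul_of_nonpos_right h hd) x

def gcdPairs (S : Finset (ℤ × ℤ)) (r : ℕ) : Finset ((ℤ × ℤ) × (ℤ × ℤ)) :=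
  {p ∈ S ×ˢ S | Int.gcd (p.1 - p.2).1 (p.1 - p.2).2 = r}

lemma ne_of_gcd_sub_pos {A B : ℤ × ℤ} (h : 0 < Int.gcd (A - B).1 (A - B).2) : A ≠ B := by
  rintro rfl
  simp at h

lemma add_smul_injective {d : ℤ × ℤ} (hd : Int.gcd d.1 d.2 = 1) (P : ℤ × ℤ) :
    Function.Injective fun k : ℤ => P + k • d :=
  (add_right_injective P).comp (smul_left_injective ℤ fun h => by simp [h] at hd)

lemma card_gcdPairs_image_add_smul {d : ℤ × ℤ} (hd : Int.gcd d.1 d.2 = 1) (P : ℤ × ℤ)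
    (K : Finset ℤ) (r : ℕ) :
    #(gcdPairs (K.image fun k => P + k • d) r) = #{p ∈ K ×ˢ K | (p.1 - p.2).natAbs = r} := by
  have he := add_smul_injective hd P
  rw [gcdPairs, ← prodMap_image_product, filter_image, card_image_of_injective _ (he.prodMap he)]
  refine congrArg card (filter_congr fun p _ => ?_)
  simp only [Prod.map, add_sub_add_left_eq_sub, ← sub_smul, gcd_smul_of_gcd_eq_one hd]

lemma card_gcdPairs_gridOn_latticeLine (n : ℕ) {P Q : ℤ × ℤ} (hPQ : P ≠ Q) {r : ℕ}
    (hr : 0 < r) :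
    #(gcdPairs (gridOn n (latticeLine P Q)) r) = 2 * (#(gridOn n (latticeLine P Q)) - r) := by
  classical
  obtain ⟨d, hd, hline⟩ := exists_primitive_forall_mem_latticeLine_iff hPQ
  have he := add_smul_injective hd P
  set K := (gridZ n).preimage _ he.injOn
  have hK : gridOn n (latticeLine P Q) = K.image fun k => P + k • d := by
    rw [image_preimage]
    ext R
    simp [gridOn, hline, Set.mem_range, eq_comm]
  have hKconn : (K : Set ℤ).OrdConnected := by
    have hIco : (Set.Ico 0 (n : ℤ)).OrdConnected := Set.ordConnected_Ico
    convert (ordConnected_preimage_affine hIco P.1 d.1).inter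
      (ordConnected_preimage_affine hIco P.2 d.2) using 1
    ext k
    simp [K, gridZ]
  rw [hK, card_gcdPairs_image_add_smul hd, card_filter_natAbs_sub_eq_of_ordConnected hKconn hr,
    card_image_of_injective _ he]

lemma card_filter_sub_eq_gridZ (n : ℕ) (v : ℤ × ℤ) :
    #{p ∈ gridZ n ×ˢ gridZ n | p.1 - p.2 = v} = (n - |v.1|).toNat * (n - |v.2|).toNat := by
  have hIco : Ico 0 (n : ℤ) = Icc 0 ((n : ℤ) - 1) := by ext; simp only [mem_Ico, mem_Icc]; omega
  have h := card_filter_sub_eq_Icc 0 (n - 1)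
  simp only [sub_add_cancel, sub_zero] at h
  rw [← h, ← h, ← card_product]
  refine card_equiv (Equiv.prodProdProdComm _ _ _ _) fun p => ?_
  simp only [gridZ, hIco, mem_filter, mem_product, Equiv.prodProdProdComm_apply, Prod.ext_iff,
    Prod.fst_sub, Prod.snd_sub]
  tauto

lemma fq_eq_card_gcdPairs (r n : ℕ) : fq r n = #(gcdPairs (gridZ n) r) := by
  have hmaps : (gcdPairs (gridZ n) r : Set ((ℤ × ℤ) × (ℤ × ℤ))).MapsTo
      (fun p => p.1 - p.2) ↑(Ioo (-(n : ℤ)) n ×ˢ Ioo (-(n : ℤ)) n) := by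
    intro p hp
    simp only [gcdPairs, gridZ, coe_filter, mem_product, mem_Ico, Set.mem_ofPred_eq] at hp
    simp only [coe_product, Set.mem_prod, mem_coe, mem_Ioo, Prod.fst_sub, Prod.snd_sub]
    omega
  rw [card_eq_sum_card_fiberwise hmaps, fq, ← sum_product', Nat.cast_sum]
  refine sum_congr rfl fun v hv => ?_
  simp only [mem_product, mem_Ioo] at hv
  rw [gcdPairs, filter_filter]
  split_ifs with hg
  · rw [filter_congr fun p _ => by rw [and_iff_right_of_imp fun h => h ▸ hg],
      card_filter_sub_eq_gridZ]
    push_cast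
    rw [Int.toNat_of_nonneg (by rw [Int.abs_eq_natAbs]; omega),
      Int.toNat_of_nonneg (by rw [Int.abs_eq_natAbs]; omega)]
  · rw [filter_false_of_mem (by rintro p - ⟨hpg, rfl⟩; exact hg hpg), card_empty,
      Nat.cast_zero]

open scoped Classical in
noncomputable def gridLines (n : ℕ) : Finset (Set (ℝ × ℝ)) :=
  (gridZ n).offDiag.image fun p => latticeLine p.1 p.2

lemma mem_gridLines_iff {n : ℕ} {L : Set (ℝ × ℝ)} :
    L ∈ gridLines n ↔ IsLine L ∧ 2 ≤ #(gridOn n L) := by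
  classical
  constructor
  · rintro hL
    obtain ⟨⟨P, Q⟩, hPQ, rfl⟩ := mem_image.mp hL
    obtain ⟨hP, hQ, hne⟩ := mem_offDiag.mp hPQ
    exact ⟨isLine_latticeLine hne, one_lt_card.mpr
      ⟨P, mem_filter.mpr ⟨hP, left_mem_latticeLine P Q⟩,
        Q, mem_filter.mpr ⟨hQ, right_mem_latticeLine P Q⟩, hne⟩⟩
  · rintro ⟨hL, h2⟩
    obtain ⟨P, hP, Q, hQ, hne⟩ := one_lt_card.mp h2
    rw [gridOn, mem_filter] at hP hQ
    exact mem_image.mpr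
      ⟨(P, Q), mem_offDiag.mpr ⟨hP.1, hQ.1, hne⟩, hL.latticeLine_eq hP.2 hQ.2 hne⟩

lemma lineCountEq_eq_card_filter (n : ℕ) {q : ℕ} (hq : 2 ≤ q) :
    lineCountEq n q = #{L ∈ gridLines n | #(gridOn n L) = q} := by
  rw [lineCountEq, ← Set.ncard_coe_finset]
  congr 1
  ext L
  simp only [Set.mem_ofPred_eq, coe_filter, mem_gridLines_iff, ncard_inter_gridPts]
  constructor
  · rintro ⟨hL, rfl⟩
    exact ⟨⟨hL, hq⟩, rfl⟩
  · rintro ⟨⟨hL, -⟩, rfl⟩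
    exact ⟨hL, rfl⟩

lemma filter_latticeLine_eq_gcdPairs (n : ℕ) {L : Set (ℝ × ℝ)} (hL : IsLine L) {r : ℕ}
    (hr : 0 < r) :
    {p ∈ gcdPairs (gridZ n) r | latticeLine p.1 p.2 = L} = gcdPairs (gridOn n L) r := by
  ext ⟨A, B⟩
  simp only [gcdPairs, gridOn, mem_filter, mem_product]
  constructor
  · rintro ⟨⟨⟨hA, hB⟩, hg⟩, rfl⟩
    exact ⟨⟨⟨hA, left_mem_latticeLine A B⟩, hB, right_mem_latticeLine A B⟩, hg⟩
  · rintro ⟨⟨⟨hA, hAL⟩, hB, hBL⟩, hg⟩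
    exact ⟨⟨⟨hA, hB⟩, hg⟩, hL.latticeLine_eq hAL hBL (ne_of_gcd_sub_pos (hg ▸ hr))⟩

lemma card_gcdPairs_gridZ (n : ℕ) {r : ℕ} (hr : 0 < r) :
    #(gcdPairs (gridZ n) r) = ∑ L ∈ gridLines n, 2 * (#(gridOn n L) - r) := by
  have hmaps : (gcdPairs (gridZ n) r : Set ((ℤ × ℤ) × (ℤ × ℤ))).MapsTo
      (fun p => latticeLine p.1 p.2) ↑(gridLines n) := by
    intro p hp
    obtain ⟨hS, hg⟩ := mem_filter.mp hp
    exact mem_image_of_mem _ (mem_offDiag.mpr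
      ⟨(mem_product.mp hS).1, (mem_product.mp hS).2, ne_of_gcd_sub_pos (hg ▸ hr)⟩)
  rw [card_eq_sum_card_fiberwise hmaps]
  refine sum_congr rfl fun L hL => ?_
  obtain ⟨⟨P, Q⟩, hPQ, rfl⟩ := mem_image.mp hL
  rw [filter_latticeLine_eq_gcdPairs n (isLine_latticeLine (mem_offDiag.mp hPQ).2.2) hr,
    card_gcdPairs_gridOn_latticeLine n (mem_offDiag.mp hPQ).2.2 hr]

lemma fq_eq_sum_gridLines (n : ℕ) {r : ℕ} (hr : 0 < r) :
    fq r n = ∑ L ∈ gridLines n, ((2 * (#(gridOn n L) - r) : ℕ) : ℤ) := by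
  rw [fq_eq_card_gcdPairs, card_gcdPairs_gridZ n hr, Nat.cast_sum]

theorem lineCountEq_eq_general (n q : ℕ) (hq : 2 ≤ q) :
    2 * (lineCountEq n q : ℤ) = fq (q + 1) n - 2 * fq q n + fq (q - 1) n := by
  rw [fq_eq_sum_gridLines n (by omega : 0 < q + 1), fq_eq_sum_gridLines n (by omega : 0 < q),
    fq_eq_sum_gridLines n (by omega : 0 < q - 1), lineCountEq_eq_card_filter n hq,
    card_filter, Nat.cast_sum, mul_sum, mul_sum, ← sum_sub_distrib, ← sum_add_distrib]
  refine sum_congr rfl fun L _ => ?_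
  split_ifs <;> omega

/-- For `n ≥ 2`, `q ≥ 2`, the number of lines through exactly `q`
gridpoints equals `(f_{q+1}(n) − 2f_q(n) + f_{q−1}(n))/2`. -/
theorem lineCountEq_eq (n q : ℕ) (hn : 2 ≤ n) (hq : 2 ≤ q) :
    2 * (lineCountEq n q : ℤ) = fq (q + 1) n - 2 * fq q n + fq (q - 1) n :=
  lineCountEq_eq_general n q hq
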